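/- Let L, L₁, L₂ ⊆ Σ* be counting-regular languages and let $ and # be two distinct new symbols not in Σ. Then each of the following languages is counting-regular: the reversal L^R = {w^R : w ∈ L}, the marked concatenation L₁{$}L₂ = {u$v : u ∈ L₁, v ∈ L₂}, the marked union {$}L₁ ∪ {#}L₂ = {$u : u ∈ L₁} ∪ {#v : v ∈ L₂}, and the marked star (L{$})* = {u₁$u₂$⋯u_m$ : m ≥ 0, u_i ∈ L}. -/
import Mathlib

/-- The counting function of a language: the number of words of length `n`. -/
noncomputable def countFn {α : Type*} (L : Set (List α)) (n : ℕ) : ℕ :=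
  Set.ncard {w | w ∈ L ∧ w.length = n}

/-- A language is regular if it is accepted by a DFA with finitely many states. -/
def IsRegularLang {α : Type*} (L : Set (List α)) : Prop :=
  ∃ (σ : Type) (_ : Fintype σ) (M : DFA α σ), ∀ w, w ∈ M.accepts ↔ w ∈ L

/-- A language is counting-regular if some regular language over a (possibly different)
finite alphabet has the same counting function. -/
def CountingRegular {α : Type*} (L : Set (List α)) : Prop :=
  ∃ (β : Type) (_ : Fintype β) (L' : Set (List β)),
    IsRegularLang L' ∧ ∀ n, countFn L' n = countFn L n

namespace CRAux
open Function


open Function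

lemma countFn_card {γ : Type*} (L : Set (List γ)) (n : ℕ) :
    countFn L n = Nat.card {w : List γ // w ∈ L ∧ w.length = n} := by
  rw [countFn, ← Nat.card_coe_set_eq]; rfl

instance sliceFinite {γ : Type*} [Finite γ] (L : Set (List γ)) (n : ℕ) :
    Finite {w : List γ // w ∈ L ∧ w.length = n} := by
  have : ({w : List γ | w ∈ L ∧ w.length = n} : Set (List γ)).Finite :=
    (List.finite_length_eq γ n).subset fun u hu => hu.2
  exact this.to_subtype

lemma natCard_sigma {n : ℕ} (f : Fin n → Type*) [∀ i, Finite (f i)] :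
    Nat.card (Σ i, f i) = ∑ i, Nat.card (f i) := by
  haveI := fun i => Fintype.ofFinite (f i)
  simp [Nat.card_eq_fintype_card]

lemma natCard_sum {X Y : Type*} [Finite X] [Finite Y] :
    Nat.card (X ⊕ Y) = Nat.card X + Nat.card Y := by
  haveI := Fintype.ofFinite X; haveI := Fintype.ofFinite Y
  simp [Nat.card_eq_fintype_card]

/-- reversal count -/
lemma countFn_reverse {γ : Type*} (L : Set (List γ)) (n : ℕ) :
    countFn {w : List γ | ∃ v ∈ L, w = v.reverse} n = countFn L n := by
  rw [countFn_card, countFn_card]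
  refine Nat.card_congr ⟨fun w => ⟨w.1.reverse, ?_, ?_⟩, fun w => ⟨w.1.reverse, ⟨w.1, w.2.1, rfl⟩, by simp [w.2.2]⟩, fun w => by simp, fun w => by simp⟩
  · obtain ⟨v, hv, hw⟩ := w.2.1; rw [hw]; simpa using hv
  · simpa using w.2.2

/-- marked concatenation -/
def mcat {β β' γ : Type*} (f : β → γ) (g : β' → γ) (m : γ)
    (A : Set (List β)) (B : Set (List β')) : Set (List γ) :=
  {w | ∃ u ∈ A, ∃ v ∈ B, w = u.map f ++ m :: v.map g}

lemma decomp_unique {β γ : Type*} {f : β → γ} (hf : Injective f) {m : γ}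
    (hm : ∀ b, f b ≠ m) :
    ∀ {u u' : List β} {r r' : List γ},
      u.map f ++ m :: r = u'.map f ++ m :: r' → u = u' ∧ r = r' := by
  intro u
  induction u with
  | nil =>
    intro u' r r' h
    cases u' with
    | nil => simpa using h
    | cons b u' =>
      simp only [List.map_nil, List.nil_append, List.map_cons, List.cons_append,
        List.cons.injEq] at h
      exact absurd h.1.symm (hm b)
  | cons a u ih =>
    intro u' r r' h
    cases u' with
    | nil =>
      simp only [List.map_cons, List.cons_append, List.map_nil, List.nil_append,
        List.cons.injEq] at h
      exact absurd h.1 (hm a)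
    | cons b u' =>
      simp only [List.map_cons, List.cons_append, List.cons.injEq] at h
      obtain ⟨h1, h2⟩ := h
      obtain ⟨h3, h4⟩ := ih h2
      exact ⟨by rw [hf h1, h3], h4⟩

lemma countFn_mcat {β β' γ : Type*} [Finite β] [Finite β'] {f : β → γ} {g : β' → γ} {m : γ}
    (hf : Injective f) (hg : Injective g) (hm : ∀ b, f b ≠ m)
    (A : Set (List β)) (B : Set (List β')) (n : ℕ) :
    countFn (mcat f g m A B) n
      = ∑ i ∈ Finset.range n, countFn A i * countFn B (n - 1 - i) := by
  rw [countFn_card]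
  have key : Nat.card {w : List γ // w ∈ mcat f g m A B ∧ w.length = n}
      = Nat.card (Σ i : Fin n, {u : List β // u ∈ A ∧ u.length = i.1} ×
          {v : List β' // v ∈ B ∧ v.length = n - 1 - i.1}) := by
    have hF : ∀ p : (Σ i : Fin n, {u : List β // u ∈ A ∧ u.length = i.1} ×
          {v : List β' // v ∈ B ∧ v.length = n - 1 - i.1}),
        (p.2.1.1.map f ++ m :: p.2.2.1.map g) ∈ mcat f g m A B ∧
          (p.2.1.1.map f ++ m :: p.2.2.1.map g).length = n := by
      rintro ⟨i, ⟨u, hu, hul⟩, ⟨v, hv, hvl⟩⟩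
      refine ⟨⟨u, hu, v, hv, rfl⟩, ?_⟩
      have := i.2
      simp only [List.length_append, List.length_map, List.length_cons, hul, hvl]
      omega
    refine (Nat.card_congr (Equiv.ofBijective (fun p => ⟨_, hF p⟩) ⟨?_, ?_⟩)).symm
    · rintro ⟨i, ⟨u, hu, hul⟩, ⟨v, hv, hvl⟩⟩ ⟨j, ⟨u', hu', hul'⟩, ⟨v', hv', hvl'⟩⟩ hE
      simp only [Subtype.mk.injEq] at hE
      obtain ⟨huu, hr⟩ := decomp_unique hf hm hE
      have hvv : v = v' := hg.list_map (by simpa using hr)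
      have hij : i = j := by apply Fin.ext; rw [← hul, ← hul', huu]
      subst hij; subst huu; subst hvv; rfl
    · rintro ⟨w, ⟨u, hu, v, hv, rfl⟩, hlen⟩
      simp only [List.length_append, List.length_map, List.length_cons] at hlen
      have hiu : u.length < n := by omega
      refine ⟨⟨⟨u.length, hiu⟩, ⟨u, hu, rfl⟩, ⟨v, hv, ?_⟩⟩, rfl⟩
      show v.length = n - 1 - u.length
      omega
  rw [key, natCard_sigma]
  rw [← Fin.sum_univ_eq_sum_range (fun i => countFn A i * countFn B (n - 1 - i)) n]
  refine Finset.sum_congr rfl fun i _ => ?_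
  rw [Nat.card_prod, countFn_card, countFn_card]

lemma countFn_congr {γ : Type*} {L L' : Set (List γ)} (h : ∀ w, w ∈ L ↔ w ∈ L') :
    ∀ n, countFn L n = countFn L' n := by
  have : L = L' := Set.ext h
  subst this; exact fun _ => rfl

/-- marked union -/
def mun {β β' γ : Type*} (f : β → γ) (g : β' → γ) (m₁ m₂ : γ)
    (A : Set (List β)) (B : Set (List β')) : Set (List γ) :=
  {w | ∃ u ∈ A, w = m₁ :: u.map f} ∪ {w | ∃ v ∈ B, w = m₂ :: v.map g}

lemma countFn_mun_zero {β β' γ : Type*} (f : β → γ) (g : β' → γ) (m₁ m₂ : γ)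
    (A : Set (List β)) (B : Set (List β')) :
    countFn (mun f g m₁ m₂ A B) 0 = 0 := by
  rw [countFn]
  convert Set.ncard_empty (List γ) using 2
  ext w
  simp only [Set.mem_setOf_eq, Set.mem_empty_iff_false, iff_false, not_and]
  rintro (⟨u, _, rfl⟩ | ⟨v, _, rfl⟩) <;> simp

lemma countFn_mun_succ {β β' γ : Type*} [Finite β] [Finite β'] {f : β → γ} {g : β' → γ}
    {m₁ m₂ : γ} (hf : Injective f) (hg : Injective g) (hm : m₁ ≠ m₂)
    (A : Set (List β)) (B : Set (List β')) (n : ℕ) :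
    countFn (mun f g m₁ m₂ A B) (n + 1) = countFn A n + countFn B n := by
  rw [countFn_card, countFn_card, countFn_card, ← natCard_sum]
  have hF : ∀ p : {u : List β // u ∈ A ∧ u.length = n} ⊕ {v : List β' // v ∈ B ∧ v.length = n},
      (Sum.elim (fun u => m₁ :: u.1.map f) (fun v => m₂ :: v.1.map g) p) ∈ mun f g m₁ m₂ A B ∧
        (Sum.elim (fun u => m₁ :: u.1.map f) (fun v => m₂ :: v.1.map g) p).length = n + 1 := by
    rintro (⟨u, hu, hul⟩ | ⟨v, hv, hvl⟩)
    · exact ⟨Or.inl ⟨u, hu, rfl⟩, by simp [hul]⟩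
    · exact ⟨Or.inr ⟨v, hv, rfl⟩, by simp [hvl]⟩
  refine (Nat.card_congr (Equiv.ofBijective (fun p => ⟨_, hF p⟩) ⟨?_, ?_⟩)).symm
  · rintro (⟨u, hu, hul⟩ | ⟨v, hv, hvl⟩) (⟨u', hu', hul'⟩ | ⟨v', hv', hvl'⟩) hE <;>
      simp only [Subtype.mk.injEq, Sum.elim_inl, Sum.elim_inr, List.cons.injEq] at hE
    · obtain ⟨-, h2⟩ := hE; have := hf.list_map h2; subst this; rfl
    · exact absurd hE.1 hm
    · exact absurd hE.1.symm hm
    · obtain ⟨-, h2⟩ := hE; have := hg.list_map h2; subst this; rfl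
  · rintro ⟨w, (⟨u, hu, rfl⟩ | ⟨v, hv, rfl⟩), hlen⟩
    · exact ⟨Sum.inl ⟨u, hu, by simpa using hlen⟩, rfl⟩
    · exact ⟨Sum.inr ⟨v, hv, by simpa using hlen⟩, rfl⟩

/-- marked star -/
def mstar {β γ : Type*} (f : β → γ) (m : γ) (A : Set (List β)) : Set (List γ) :=
  {w | ∃ us : List (List β), (∀ u ∈ us, u ∈ A) ∧
    w = (us.map fun u => u.map f ++ [m]).flatten}

lemma nil_mem_mstar {β γ : Type*} (f : β → γ) (m : γ) (A : Set (List β)) :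
    [] ∈ mstar f m A := ⟨[], by simp, by simp⟩

lemma cons_mem_mstar {β γ : Type*} {f : β → γ} {m : γ} {A : Set (List β)}
    {u : List β} (hu : u ∈ A) {r : List γ} (hr : r ∈ mstar f m A) :
    u.map f ++ m :: r ∈ mstar f m A := by
  obtain ⟨us, hus, rfl⟩ := hr
  refine ⟨u :: us, ?_, by simp⟩
  intro x hx
  rcases List.mem_cons.mp hx with rfl | hx
  · exact hu
  · exact hus x hx

lemma countFn_mstar_zero {β γ : Type*} (f : β → γ) (m : γ) (A : Set (List β)) :
    countFn (mstar f m A) 0 = 1 := by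
  rw [countFn]
  convert Set.ncard_singleton ([] : List γ) using 2
  ext w
  simp only [Set.mem_setOf_eq, Set.mem_singleton_iff, List.length_eq_zero_iff]
  constructor
  · rintro ⟨-, rfl⟩; rfl
  · rintro rfl; exact ⟨nil_mem_mstar f m A, rfl⟩

lemma mstar_succ_slice {β γ : Type*} (f : β → γ) (m : γ) (A : Set (List β))
    {w : List γ} (hw : w ≠ []) :
    w ∈ mstar f m A ↔ w ∈ mcat f id m A (mstar f m A) := by
  constructor
  · rintro ⟨us, hus, rfl⟩
    cases us with
    | nil => simp at hw
    | cons u us =>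
      refine ⟨u, hus u (by simp), (us.map fun u => u.map f ++ [m]).flatten,
        ⟨us, fun x hx => hus x (by simp [hx]), rfl⟩, by simp⟩
  · rintro ⟨u, hu, v, hv, rfl⟩
    have := cons_mem_mstar hu hv
    simpa using this

lemma countFn_mstar_succ {β γ : Type*} [Finite β] [Finite γ] {f : β → γ} {m : γ}
    (hf : Injective f) (hm : ∀ b, f b ≠ m) (A : Set (List β)) (n : ℕ) :
    countFn (mstar f m A) (n + 1)
      = ∑ i ∈ Finset.range (n + 1), countFn A i * countFn (mstar f m A) (n - i) := by
  have h1 : countFn (mstar f m A) (n + 1) = countFn (mcat f id m A (mstar f m A)) (n + 1) := by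
    rw [countFn, countFn]
    congr 1
    ext w
    simp only [Set.mem_setOf_eq, and_congr_left_iff]
    intro hl
    have hw : w ≠ [] := by rintro rfl; simp at hl
    exact mstar_succ_slice f m A hw
  rw [h1, countFn_mcat hf injective_id hm A (mstar f m A) (n + 1)]
  refine Finset.sum_congr rfl fun i hi => ?_
  have : n + 1 - 1 - i = n - i := by omega
  rw [this]

lemma countFn_mstar_congr {β γ β' γ' : Type*} [Finite β] [Finite γ] [Finite β'] [Finite γ']
    {f : β → γ} {m : γ} {f' : β' → γ'} {m' : γ'}
    (hf : Injective f) (hm : ∀ b, f b ≠ m) (hf' : Injective f') (hm' : ∀ b, f' b ≠ m')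
    {A : Set (List β)} {A' : Set (List β')} (hc : ∀ n, countFn A n = countFn A' n) :
    ∀ n, countFn (mstar f m A) n = countFn (mstar f' m' A') n := by
  intro n
  induction n using Nat.strong_induction_on with
  | _ n ih =>
    match n with
    | 0 => rw [countFn_mstar_zero, countFn_mstar_zero]
    | n + 1 =>
      rw [countFn_mstar_succ hf hm, countFn_mstar_succ hf' hm']
      refine Finset.sum_congr rfl fun i hi => ?_
      have : n - i < n + 1 := by omega
      rw [hc i, ih _ this]
section CatDFA
variable {β₁ β₂ σ₁ σ₂ : Type} (M₁ : DFA β₁ σ₁) (M₂ : DFA β₂ σ₂)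

open Classical in
noncomputable def catDFA : DFA ((β₁ ⊕ β₂) ⊕ Unit) (Option (σ₁ ⊕ σ₂)) where
  step := fun x a =>
    match x, a with
    | some (Sum.inl s), Sum.inl (Sum.inl b) => some (Sum.inl (M₁.step s b))
    | some (Sum.inl s), Sum.inr _ => if s ∈ M₁.accept then some (Sum.inr M₂.start) else none
    | some (Sum.inr t), Sum.inl (Sum.inr b) => some (Sum.inr (M₂.step t b))
    | _, _ => none
  start := some (Sum.inl M₁.start)
  accept := {x | ∃ t ∈ M₂.accept, x = some (Sum.inr t)}

lemma catDFA_dead : ∀ w, (catDFA M₁ M₂).evalFrom none w = none := by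
  intro w
  induction w with
  | nil => rfl
  | cons a w ih =>
    show (catDFA M₁ M₂).evalFrom ((catDFA M₁ M₂).step none a) w = none
    have : (catDFA M₁ M₂).step none a = none := rfl
    rw [this, ih]

lemma catDFA_run1 : ∀ (u : List β₁) (s : σ₁),
    (catDFA M₁ M₂).evalFrom (some (Sum.inl s)) (u.map fun b => Sum.inl (Sum.inl b))
      = some (Sum.inl (M₁.evalFrom s u)) := by
  intro u
  induction u with
  | nil => intro s; rfl
  | cons b u ih => intro s; exact ih (M₁.step s b)

lemma catDFA_run2 : ∀ (v : List β₂) (t : σ₂),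
    (catDFA M₁ M₂).evalFrom (some (Sum.inr t)) (v.map fun b => Sum.inl (Sum.inr b))
      = some (Sum.inr (M₂.evalFrom t v)) := by
  intro v
  induction v with
  | nil => intro t; rfl
  | cons b v ih => intro t; exact ih (M₂.step t b)

lemma catDFA_aux2 : ∀ (w : List ((β₁ ⊕ β₂) ⊕ Unit)) (t : σ₂),
    (catDFA M₁ M₂).evalFrom (some (Sum.inr t)) w ∈ (catDFA M₁ M₂).accept →
    ∃ v, w = v.map (fun b => Sum.inl (Sum.inr b)) ∧ M₂.evalFrom t v ∈ M₂.accept := by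
  intro w
  induction w with
  | nil =>
    intro t h
    obtain ⟨t', ht', heq⟩ := h
    simp only [DFA.evalFrom_nil, Option.some.injEq, Sum.inr.injEq] at heq
    exact ⟨[], rfl, heq ▸ ht'⟩
  | cons a w ih =>
    intro t h
    match a with
    | Sum.inl (Sum.inr b) =>
      obtain ⟨v, hv1, hv2⟩ := ih (M₂.step t b) h
      exact ⟨b :: v, by simp [hv1], hv2⟩
    | Sum.inl (Sum.inl b) =>
      rw [show (catDFA M₁ M₂).evalFrom (some (Sum.inr t)) (Sum.inl (Sum.inl b) :: w)
        = (catDFA M₁ M₂).evalFrom none w from rfl, catDFA_dead] at h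
      obtain ⟨t', -, heq⟩ := h
      simp at heq
    | Sum.inr () =>
      rw [show (catDFA M₁ M₂).evalFrom (some (Sum.inr t)) (Sum.inr () :: w)
        = (catDFA M₁ M₂).evalFrom none w from rfl, catDFA_dead] at h
      obtain ⟨t', -, heq⟩ := h
      simp at heq

open Classical in
lemma catDFA_aux1 : ∀ (w : List ((β₁ ⊕ β₂) ⊕ Unit)) (s : σ₁),
    (catDFA M₁ M₂).evalFrom (some (Sum.inl s)) w ∈ (catDFA M₁ M₂).accept →
    ∃ u v, w = (u.map fun b => Sum.inl (Sum.inl b)) ++ Sum.inr ()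
          :: (v.map fun b => Sum.inl (Sum.inr b)) ∧
      M₁.evalFrom s u ∈ M₁.accept ∧ M₂.evalFrom M₂.start v ∈ M₂.accept := by
  intro w
  induction w with
  | nil =>
    intro s h
    obtain ⟨t', -, heq⟩ := h
    simp at heq
  | cons a w ih =>
    intro s h
    match a with
    | Sum.inl (Sum.inl b) =>
      obtain ⟨u, v, h1, h2, h3⟩ := ih (M₁.step s b) h
      exact ⟨b :: u, v, by simp [h1], h2, h3⟩
    | Sum.inl (Sum.inr b) =>
      rw [show (catDFA M₁ M₂).evalFrom (some (Sum.inl s)) (Sum.inl (Sum.inr b) :: w)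
        = (catDFA M₁ M₂).evalFrom none w from rfl, catDFA_dead] at h
      obtain ⟨t', -, heq⟩ := h
      simp at heq
    | Sum.inr () =>
      by_cases hs : s ∈ M₁.accept
      · rw [show (catDFA M₁ M₂).evalFrom (some (Sum.inl s)) (Sum.inr () :: w)
          = (catDFA M₁ M₂).evalFrom ((catDFA M₁ M₂).step (some (Sum.inl s)) (Sum.inr ())) w
          from rfl] at h
        rw [show (catDFA M₁ M₂).step (some (Sum.inl s)) (Sum.inr ())
          = if s ∈ M₁.accept then some (Sum.inr M₂.start) else none from rfl, if_pos hs] at h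
        obtain ⟨v, hv1, hv2⟩ := catDFA_aux2 M₁ M₂ w M₂.start h
        exact ⟨[], v, by simp [hv1], hs, hv2⟩
      · rw [show (catDFA M₁ M₂).evalFrom (some (Sum.inl s)) (Sum.inr () :: w)
          = (catDFA M₁ M₂).evalFrom ((catDFA M₁ M₂).step (some (Sum.inl s)) (Sum.inr ())) w
          from rfl] at h
        rw [show (catDFA M₁ M₂).step (some (Sum.inl s)) (Sum.inr ())
          = if s ∈ M₁.accept then some (Sum.inr M₂.start) else none from rfl,
          if_neg hs, catDFA_dead] at h
        obtain ⟨t', -, heq⟩ := h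
        simp at heq

open Classical in
lemma catDFA_accepts (w : List ((β₁ ⊕ β₂) ⊕ Unit)) :
    w ∈ (catDFA M₁ M₂).accepts ↔
      w ∈ mcat (fun b => Sum.inl (Sum.inl b)) (fun b => Sum.inl (Sum.inr b)) (Sum.inr ())
        {x | x ∈ M₁.accepts} {x | x ∈ M₂.accepts} := by
  constructor
  · intro h
    rw [DFA.mem_accepts] at h
    obtain ⟨u, v, h1, h2, h3⟩ := catDFA_aux1 M₁ M₂ w M₁.start h
    exact ⟨u, h2, v, h3, h1⟩
  · rintro ⟨u, hu, v, hv, rfl⟩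
    rw [DFA.mem_accepts]
    show (catDFA M₁ M₂).evalFrom (some (Sum.inl M₁.start)) _ ∈ _
    rw [show ((u.map fun b => Sum.inl (Sum.inl b)) ++ Sum.inr ()
        :: (v.map fun b => Sum.inl (Sum.inr b)) : List ((β₁ ⊕ β₂) ⊕ Unit))
      = (u.map fun b => Sum.inl (Sum.inl b)) ++ (Sum.inr ()
        :: (v.map fun b => Sum.inl (Sum.inr b))) from rfl,
      DFA.evalFrom_of_append, catDFA_run1]
    rw [show (catDFA M₁ M₂).evalFrom (some (Sum.inl (M₁.evalFrom M₁.start u)))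
        (Sum.inr () :: (v.map fun b => Sum.inl (Sum.inr b)))
      = (catDFA M₁ M₂).evalFrom ((catDFA M₁ M₂).step (some (Sum.inl (M₁.evalFrom M₁.start u)))
          (Sum.inr ())) (v.map fun b => Sum.inl (Sum.inr b)) from rfl]
    rw [show (catDFA M₁ M₂).step (some (Sum.inl (M₁.evalFrom M₁.start u))) (Sum.inr ())
      = if M₁.evalFrom M₁.start u ∈ M₁.accept then some (Sum.inr M₂.start) else none from rfl,
      if_pos (show M₁.evalFrom M₁.start u ∈ M₁.accept from (DFA.mem_accepts M₁).mp hu),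
      catDFA_run2]
    exact ⟨M₂.evalFrom M₂.start v, (DFA.mem_accepts M₂).mp hv, rfl⟩

end CatDFA
section UnDFA
variable {β₁ β₂ σ₁ σ₂ : Type} (M₁ : DFA β₁ σ₁) (M₂ : DFA β₂ σ₂)

def unDFA : DFA ((β₁ ⊕ β₂) ⊕ Bool) (Option (Unit ⊕ σ₁ ⊕ σ₂)) where
  step := fun x a =>
    match x, a with
    | some (Sum.inl _), Sum.inr false => some (Sum.inr (Sum.inl M₁.start))
    | some (Sum.inl _), Sum.inr true => some (Sum.inr (Sum.inr M₂.start))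
    | some (Sum.inr (Sum.inl s)), Sum.inl (Sum.inl b) => some (Sum.inr (Sum.inl (M₁.step s b)))
    | some (Sum.inr (Sum.inr t)), Sum.inl (Sum.inr b) => some (Sum.inr (Sum.inr (M₂.step t b)))
    | _, _ => none
  start := some (Sum.inl ())
  accept := {x | (∃ s ∈ M₁.accept, x = some (Sum.inr (Sum.inl s)))
    ∨ (∃ t ∈ M₂.accept, x = some (Sum.inr (Sum.inr t)))}

lemma unDFA_dead : ∀ w, (unDFA M₁ M₂).evalFrom none w = none := by
  intro w
  induction w with
  | nil => rfl
  | cons a w ih =>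
    show (unDFA M₁ M₂).evalFrom ((unDFA M₁ M₂).step none a) w = none
    have : (unDFA M₁ M₂).step none a = none := rfl
    rw [this, ih]

lemma unDFA_not_acc_none : none ∉ (unDFA M₁ M₂).accept := by
  rintro (⟨s, -, heq⟩ | ⟨t, -, heq⟩) <;> simp at heq

lemma unDFA_run1 : ∀ (u : List β₁) (s : σ₁),
    (unDFA M₁ M₂).evalFrom (some (Sum.inr (Sum.inl s))) (u.map fun b => Sum.inl (Sum.inl b))
      = some (Sum.inr (Sum.inl (M₁.evalFrom s u))) := by
  intro u
  induction u with
  | nil => intro s; rfl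
  | cons b u ih => intro s; exact ih (M₁.step s b)

lemma unDFA_run2 : ∀ (v : List β₂) (t : σ₂),
    (unDFA M₁ M₂).evalFrom (some (Sum.inr (Sum.inr t))) (v.map fun b => Sum.inl (Sum.inr b))
      = some (Sum.inr (Sum.inr (M₂.evalFrom t v))) := by
  intro v
  induction v with
  | nil => intro t; rfl
  | cons b v ih => intro t; exact ih (M₂.step t b)

lemma unDFA_aux1 : ∀ (w : List ((β₁ ⊕ β₂) ⊕ Bool)) (s : σ₁),
    (unDFA M₁ M₂).evalFrom (some (Sum.inr (Sum.inl s))) w ∈ (unDFA M₁ M₂).accept →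
    ∃ u, w = u.map (fun b => Sum.inl (Sum.inl b)) ∧ M₁.evalFrom s u ∈ M₁.accept := by
  intro w
  induction w with
  | nil =>
    rintro s (⟨s', hs', heq⟩ | ⟨t', -, heq⟩)
    · simp only [DFA.evalFrom_nil, Option.some.injEq, Sum.inr.injEq, Sum.inl.injEq] at heq
      exact ⟨[], rfl, heq ▸ hs'⟩
    · simp only [DFA.evalFrom_nil, Option.some.injEq, Sum.inr.injEq] at heq
      exact absurd heq (by simp)
  | cons a w ih =>
    intro s h
    match a with
    | Sum.inl (Sum.inl b) =>
      obtain ⟨u, h1, h2⟩ := ih (M₁.step s b) h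
      exact ⟨b :: u, by simp [h1], h2⟩
    | Sum.inl (Sum.inr b) =>
      rw [show (unDFA M₁ M₂).evalFrom (some (Sum.inr (Sum.inl s))) (Sum.inl (Sum.inr b) :: w)
        = (unDFA M₁ M₂).evalFrom none w from rfl, unDFA_dead] at h
      exact absurd h (unDFA_not_acc_none M₁ M₂)
    | Sum.inr c =>
      rw [show (unDFA M₁ M₂).evalFrom (some (Sum.inr (Sum.inl s))) (Sum.inr c :: w)
        = (unDFA M₁ M₂).evalFrom ((unDFA M₁ M₂).step (some (Sum.inr (Sum.inl s))) (Sum.inr c)) w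
        from rfl] at h
      have : (unDFA M₁ M₂).step (some (Sum.inr (Sum.inl s))) (Sum.inr c) = none := by
        cases c <;> rfl
      rw [this, unDFA_dead] at h
      exact absurd h (unDFA_not_acc_none M₁ M₂)

lemma unDFA_aux2 : ∀ (w : List ((β₁ ⊕ β₂) ⊕ Bool)) (t : σ₂),
    (unDFA M₁ M₂).evalFrom (some (Sum.inr (Sum.inr t))) w ∈ (unDFA M₁ M₂).accept →
    ∃ v, w = v.map (fun b => Sum.inl (Sum.inr b)) ∧ M₂.evalFrom t v ∈ M₂.accept := by
  intro w
  induction w with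
  | nil =>
    rintro t (⟨s', -, heq⟩ | ⟨t', ht', heq⟩)
    · simp only [DFA.evalFrom_nil, Option.some.injEq, Sum.inr.injEq] at heq
      exact absurd heq (by simp)
    · simp only [DFA.evalFrom_nil, Option.some.injEq, Sum.inr.injEq] at heq
      exact ⟨[], rfl, heq ▸ ht'⟩
  | cons a w ih =>
    intro t h
    match a with
    | Sum.inl (Sum.inr b) =>
      obtain ⟨v, h1, h2⟩ := ih (M₂.step t b) h
      exact ⟨b :: v, by simp [h1], h2⟩
    | Sum.inl (Sum.inl b) =>
      rw [show (unDFA M₁ M₂).evalFrom (some (Sum.inr (Sum.inr t))) (Sum.inl (Sum.inl b) :: w)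
        = (unDFA M₁ M₂).evalFrom none w from rfl, unDFA_dead] at h
      exact absurd h (unDFA_not_acc_none M₁ M₂)
    | Sum.inr c =>
      rw [show (unDFA M₁ M₂).evalFrom (some (Sum.inr (Sum.inr t))) (Sum.inr c :: w)
        = (unDFA M₁ M₂).evalFrom ((unDFA M₁ M₂).step (some (Sum.inr (Sum.inr t))) (Sum.inr c)) w
        from rfl] at h
      have : (unDFA M₁ M₂).step (some (Sum.inr (Sum.inr t))) (Sum.inr c) = none := by
        cases c <;> rfl
      rw [this, unDFA_dead] at h
      exact absurd h (unDFA_not_acc_none M₁ M₂)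

lemma unDFA_accepts (w : List ((β₁ ⊕ β₂) ⊕ Bool)) :
    w ∈ (unDFA M₁ M₂).accepts ↔
      w ∈ mun (fun b => Sum.inl (Sum.inl b)) (fun b => Sum.inl (Sum.inr b))
        (Sum.inr false) (Sum.inr true) {x | x ∈ M₁.accepts} {x | x ∈ M₂.accepts} := by
  constructor
  · intro h
    rw [DFA.mem_accepts] at h
    match w with
    | [] =>
      rcases h with ⟨s', -, heq⟩ | ⟨t', -, heq⟩ <;>
        · simp only [DFA.eval_nil] at heq
          rw [show (unDFA M₁ M₂).start = some (Sum.inl ()) from rfl] at heq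
          exact absurd heq (by simp)
    | a :: w' =>
      match a with
      | Sum.inl c =>
        have hd : (unDFA M₁ M₂).eval (Sum.inl c :: w')
            = (unDFA M₁ M₂).evalFrom ((unDFA M₁ M₂).step (some (Sum.inl ())) (Sum.inl c)) w' :=
          rfl
        have hs : (unDFA M₁ M₂).step (some (Sum.inl ())) (Sum.inl c) = none := by
          rcases c with b | b <;> rfl
        rw [hd, hs, unDFA_dead] at h
        exact absurd h (unDFA_not_acc_none M₁ M₂)
      | Sum.inr false =>
        have hd : (unDFA M₁ M₂).eval (Sum.inr false :: w')
            = (unDFA M₁ M₂).evalFrom (some (Sum.inr (Sum.inl M₁.start))) w' := rfl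
        rw [hd] at h
        obtain ⟨u, h1, h2⟩ := unDFA_aux1 M₁ M₂ w' M₁.start h
        exact Or.inl ⟨u, h2, by rw [h1]⟩
      | Sum.inr true =>
        have hd : (unDFA M₁ M₂).eval (Sum.inr true :: w')
            = (unDFA M₁ M₂).evalFrom (some (Sum.inr (Sum.inr M₂.start))) w' := rfl
        rw [hd] at h
        obtain ⟨v, h1, h2⟩ := unDFA_aux2 M₁ M₂ w' M₂.start h
        exact Or.inr ⟨v, h2, by rw [h1]⟩
  · rintro (⟨u, hu, rfl⟩ | ⟨v, hv, rfl⟩)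
    · rw [DFA.mem_accepts]
      have hd : (unDFA M₁ M₂).eval (Sum.inr false :: u.map fun b => Sum.inl (Sum.inl b))
          = (unDFA M₁ M₂).evalFrom (some (Sum.inr (Sum.inl M₁.start)))
              (u.map fun b => Sum.inl (Sum.inl b)) := rfl
      rw [hd, unDFA_run1]
      exact Or.inl ⟨M₁.evalFrom M₁.start u, (DFA.mem_accepts M₁).mp hu, rfl⟩
    · rw [DFA.mem_accepts]
      have hd : (unDFA M₁ M₂).eval (Sum.inr true :: v.map fun b => Sum.inl (Sum.inr b))
          = (unDFA M₁ M₂).evalFrom (some (Sum.inr (Sum.inr M₂.start)))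
              (v.map fun b => Sum.inl (Sum.inr b)) := rfl
      rw [hd, unDFA_run2]
      exact Or.inr ⟨M₂.evalFrom M₂.start v, (DFA.mem_accepts M₂).mp hv, rfl⟩

end UnDFA
section StarDFA
variable {β₀ σ₀ : Type} (M : DFA β₀ σ₀)

open Classical in
noncomputable def starDFA : DFA (β₀ ⊕ Unit) (Option (σ₀ × Bool)) where
  step := fun x a =>
    match x, a with
    | some (s, _), Sum.inl b => some (M.step s b, false)
    | some (s, _), Sum.inr _ => if s ∈ M.accept then some (M.start, true) else none
    | none, _ => none
  start := some (M.start, true)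
  accept := {x | ∃ s, x = some (s, true)}

lemma starDFA_dead : ∀ w, (starDFA M).evalFrom none w = none := by
  intro w
  induction w with
  | nil => rfl
  | cons a w ih =>
    show (starDFA M).evalFrom ((starDFA M).step none a) w = none
    have : (starDFA M).step none a = none := rfl
    rw [this, ih]

lemma starDFA_not_acc_none : none ∉ (starDFA M).accept := by
  rintro ⟨s, heq⟩; simp at heq

lemma starDFA_run : ∀ (u : List β₀) (s : σ₀) (b : Bool), ∃ b' : Bool,
    (starDFA M).evalFrom (some (s, b)) (u.map Sum.inl) = some (M.evalFrom s u, b') := by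
  intro u
  induction u with
  | nil => intro s b; exact ⟨b, rfl⟩
  | cons c u ih => intro s b; exact ih (M.step s c) false

open Classical in
lemma starDFA_aux : ∀ (w : List (β₀ ⊕ Unit)) (s : σ₀) (b : Bool),
    (starDFA M).evalFrom (some (s, b)) w ∈ (starDFA M).accept →
    (w = [] ∧ b = true) ∨
      ∃ u r, w = u.map Sum.inl ++ Sum.inr () :: r ∧ M.evalFrom s u ∈ M.accept ∧
        r ∈ mstar Sum.inl (Sum.inr ()) {x | x ∈ M.accepts} := by
  intro w
  induction w with
  | nil =>
    rintro s b ⟨s', heq⟩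
    simp only [DFA.evalFrom_nil, Option.some.injEq, Prod.mk.injEq] at heq
    exact Or.inl ⟨rfl, heq.2⟩
  | cons a w ih =>
    intro s b h
    match a with
    | Sum.inl c =>
      have hd : (starDFA M).evalFrom (some (s, b)) (Sum.inl c :: w)
          = (starDFA M).evalFrom (some (M.step s c, false)) w := rfl
      rw [hd] at h
      rcases ih (M.step s c) false h with ⟨-, hb⟩ | ⟨u, r, h1, h2, h3⟩
      · exact absurd hb (by simp)
      · exact Or.inr ⟨c :: u, r, by simp [h1], h2, h3⟩
    | Sum.inr () =>
      by_cases hs : s ∈ M.accept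
      · have hd : (starDFA M).evalFrom (some (s, b)) (Sum.inr () :: w)
            = (starDFA M).evalFrom
                (if s ∈ M.accept then some (M.start, true) else none) w := rfl
        rw [hd, if_pos hs] at h
        rcases ih M.start true h with ⟨rfl, -⟩ | ⟨u, r, h1, h2, h3⟩
        · exact Or.inr ⟨[], [], rfl, hs, nil_mem_mstar _ _ _⟩
        · refine Or.inr ⟨[], w, by simp, hs, ?_⟩
          rw [h1]
          exact cons_mem_mstar h2 h3
      · have hd : (starDFA M).evalFrom (some (s, b)) (Sum.inr () :: w)
            = (starDFA M).evalFrom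
                (if s ∈ M.accept then some (M.start, true) else none) w := rfl
        rw [hd, if_neg hs, starDFA_dead] at h
        exact absurd h (starDFA_not_acc_none M)

open Classical in
lemma starDFA_accepts (w : List (β₀ ⊕ Unit)) :
    w ∈ (starDFA M).accepts ↔
      w ∈ mstar Sum.inl (Sum.inr ()) {x | x ∈ M.accepts} := by
  constructor
  · intro h
    rw [DFA.mem_accepts] at h
    rcases starDFA_aux M w M.start true h with ⟨rfl, -⟩ | ⟨u, r, h1, h2, h3⟩
    · exact nil_mem_mstar _ _ _
    · rw [h1]
      exact cons_mem_mstar h2 h3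
  · rintro ⟨us, hus, rfl⟩
    rw [DFA.mem_accepts]
    induction us with
    | nil => exact ⟨M.start, rfl⟩
    | cons u us ih =>
      have hu : u ∈ {x | x ∈ M.accepts} := hus u (by simp)
      have hflat : ((u :: us).map fun x => x.map Sum.inl ++ [Sum.inr ()]).flatten
          = (u.map Sum.inl : List (β₀ ⊕ Unit)) ++
            (Sum.inr () :: (us.map fun x => x.map Sum.inl ++ [Sum.inr ()]).flatten) := by
        simp
      rw [hflat]
      show (starDFA M).evalFrom (starDFA M).start _ ∈ _
      rw [DFA.evalFrom_of_append]
      obtain ⟨b', hb'⟩ := starDFA_run M u M.start true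
      rw [show (starDFA M).start = some (M.start, true) from rfl, hb']
      have hm : (starDFA M).evalFrom (some (M.evalFrom M.start u, b'))
            (Sum.inr () :: (us.map fun x => x.map Sum.inl ++ [Sum.inr ()]).flatten)
          = (starDFA M).evalFrom
              (if M.evalFrom M.start u ∈ M.accept then some (M.start, true) else none)
              ((us.map fun x => x.map Sum.inl ++ [Sum.inr ()]).flatten) := rfl
      rw [hm, if_pos (show M.evalFrom M.start u ∈ M.accept from (DFA.mem_accepts M).mp hu)]
      exact ih (fun x hx => hus x (by simp [hx]))
  end StarDFA

lemma isRegular_mcat {β₁ β₂ : Type} {L₁' : Set (List β₁)} {L₂' : Set (List β₂)}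
    (h₁ : IsRegularLang L₁') (h₂ : IsRegularLang L₂') :
    IsRegularLang (mcat (fun b => Sum.inl (Sum.inl b)) (fun b => Sum.inl (Sum.inr b))
      (Sum.inr ()) L₁' L₂' : Set (List ((β₁ ⊕ β₂) ⊕ Unit))) := by
  obtain ⟨σ₁, i₁, M₁, hM₁⟩ := h₁
  obtain ⟨σ₂, i₂, M₂, hM₂⟩ := h₂
  haveI := i₁; haveI := i₂
  have e1 : {x | x ∈ M₁.accepts} = L₁' := Set.ext hM₁
  have e2 : {x | x ∈ M₂.accepts} = L₂' := Set.ext hM₂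
  refine ⟨Option (σ₁ ⊕ σ₂), inferInstance, catDFA M₁ M₂, fun w => ?_⟩
  rw [catDFA_accepts, e1, e2]

lemma isRegular_mun {β₁ β₂ : Type} {L₁' : Set (List β₁)} {L₂' : Set (List β₂)}
    (h₁ : IsRegularLang L₁') (h₂ : IsRegularLang L₂') :
    IsRegularLang (mun (fun b => Sum.inl (Sum.inl b)) (fun b => Sum.inl (Sum.inr b))
      (Sum.inr false) (Sum.inr true) L₁' L₂' : Set (List ((β₁ ⊕ β₂) ⊕ Bool))) := by
  obtain ⟨σ₁, i₁, M₁, hM₁⟩ := h₁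
  obtain ⟨σ₂, i₂, M₂, hM₂⟩ := h₂
  haveI := i₁; haveI := i₂
  have e1 : {x | x ∈ M₁.accepts} = L₁' := Set.ext hM₁
  have e2 : {x | x ∈ M₂.accepts} = L₂' := Set.ext hM₂
  refine ⟨Option (Unit ⊕ σ₁ ⊕ σ₂), inferInstance, unDFA M₁ M₂, fun w => ?_⟩
  rw [unDFA_accepts, e1, e2]

lemma isRegular_mstar {β₀ : Type} {L' : Set (List β₀)} (h : IsRegularLang L') :
    IsRegularLang (mstar Sum.inl (Sum.inr ()) L' : Set (List (β₀ ⊕ Unit))) := by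
  obtain ⟨σ₀, i₀, M, hM⟩ := h
  haveI := i₀
  have e : {x | x ∈ M.accepts} = L' := Set.ext hM
  refine ⟨Option (σ₀ × Bool), inferInstance, starDFA M, fun w => ?_⟩
  rw [starDFA_accepts, e]

end CRAux

open CRAux Function in
/-- Reversal, marked concatenation, marked union, and marked star preserve
counting-regularity. The two new symbols `$` and `#` are `Sum.inr 0` and `Sum.inr 1`. -/
theorem stmt12 {α : Type} [Fintype α] (L L₁ L₂ : Set (List α))
    (h : CountingRegular L) (h1 : CountingRegular L₁) (h2 : CountingRegular L₂) :
    CountingRegular {w : List α | ∃ v ∈ L, w = v.reverse} ∧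
    CountingRegular {w : List (α ⊕ Fin 2) | ∃ u ∈ L₁, ∃ v ∈ L₂,
      w = u.map Sum.inl ++ [Sum.inr 0] ++ v.map Sum.inl} ∧
    CountingRegular ({w : List (α ⊕ Fin 2) | ∃ u ∈ L₁, w = Sum.inr 0 :: u.map Sum.inl} ∪
      {w : List (α ⊕ Fin 2) | ∃ v ∈ L₂, w = Sum.inr 1 :: v.map Sum.inl}) ∧
    CountingRegular {w : List (α ⊕ Fin 2) | ∃ us : List (List α), (∀ u ∈ us, u ∈ L) ∧
      w = (us.map fun u => u.map Sum.inl ++ [Sum.inr 0]).flatten} := by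
  obtain ⟨β₀, i₀, L₀', hreg₀, hc₀⟩ := h
  obtain ⟨β₁, i₁, L₁', hreg₁, hc₁⟩ := h1
  obtain ⟨β₂, i₂, L₂', hreg₂, hc₂⟩ := h2
  haveI := i₀; haveI := i₁; haveI := i₂
  have hinl : Injective (fun b : α => (Sum.inl b : α ⊕ Fin 2)) := fun a b hab => by
    simpa using hab
  have hf1 : Injective (fun b : β₁ => (Sum.inl (Sum.inl b) : (β₁ ⊕ β₂) ⊕ Unit)) :=
    fun a b hab => by simpa using hab
  have hg1 : Injective (fun b : β₂ => (Sum.inl (Sum.inr b) : (β₁ ⊕ β₂) ⊕ Unit)) :=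
    fun a b hab => by simpa using hab
  have hf1' : Injective (fun b : β₁ => (Sum.inl (Sum.inl b) : (β₁ ⊕ β₂) ⊕ Bool)) :=
    fun a b hab => by simpa using hab
  have hg1' : Injective (fun b : β₂ => (Sum.inl (Sum.inr b) : (β₁ ⊕ β₂) ⊕ Bool)) :=
    fun a b hab => by simpa using hab
  refine ⟨?_, ?_, ?_, ?_⟩
  · -- reversal
    exact ⟨β₀, i₀, L₀', hreg₀, fun n => (hc₀ n).trans (countFn_reverse L n).symm⟩
  · -- marked concatenation
    have hset : {w : List (α ⊕ Fin 2) | ∃ u ∈ L₁, ∃ v ∈ L₂,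
        w = u.map Sum.inl ++ [Sum.inr 0] ++ v.map Sum.inl}
        = mcat Sum.inl Sum.inl (Sum.inr 0) L₁ L₂ := by
      ext w
      constructor <;> rintro ⟨u, hu, v, hv, rfl⟩ <;> exact ⟨u, hu, v, hv, by simp⟩
    refine ⟨(β₁ ⊕ β₂) ⊕ Unit, inferInstance,
      mcat (fun b => Sum.inl (Sum.inl b)) (fun b => Sum.inl (Sum.inr b)) (Sum.inr ()) L₁' L₂',
      isRegular_mcat hreg₁ hreg₂, fun n => ?_⟩
    rw [hset, countFn_mcat hf1 hg1 (fun b => by simp) L₁' L₂' n,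
      countFn_mcat Sum.inl_injective Sum.inl_injective (fun b => by simp) L₁ L₂ n]
    exact Finset.sum_congr rfl fun i _ => by rw [hc₁ i, hc₂ (n - 1 - i)]
  · -- marked union
    have hset : ({w : List (α ⊕ Fin 2) | ∃ u ∈ L₁, w = Sum.inr 0 :: u.map Sum.inl} ∪
        {w : List (α ⊕ Fin 2) | ∃ v ∈ L₂, w = Sum.inr 1 :: v.map Sum.inl})
        = mun Sum.inl Sum.inl (Sum.inr 0) (Sum.inr 1) L₁ L₂ := rfl
    refine ⟨(β₁ ⊕ β₂) ⊕ Bool, inferInstance,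
      mun (fun b => Sum.inl (Sum.inl b)) (fun b => Sum.inl (Sum.inr b))
        (Sum.inr false) (Sum.inr true) L₁' L₂',
      isRegular_mun hreg₁ hreg₂, fun n => ?_⟩
    rw [hset]
    match n with
    | 0 => rw [countFn_mun_zero, countFn_mun_zero]
    | n + 1 =>
      rw [countFn_mun_succ hf1' hg1' (by simp) L₁' L₂' n,
        countFn_mun_succ Sum.inl_injective Sum.inl_injective
          (by simp [Fin.ext_iff]) L₁ L₂ n, hc₁ n, hc₂ n]
  · -- marked star
    have hset : {w : List (α ⊕ Fin 2) | ∃ us : List (List α), (∀ u ∈ us, u ∈ L) ∧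
        w = (us.map fun u => u.map Sum.inl ++ [Sum.inr 0]).flatten}
        = mstar Sum.inl (Sum.inr 0) L := rfl
    refine ⟨β₀ ⊕ Unit, inferInstance, mstar Sum.inl (Sum.inr ()) L₀',
      isRegular_mstar hreg₀, fun n => ?_⟩
    rw [hset]
    exact countFn_mstar_congr Sum.inl_injective (fun b => by simp)
      Sum.inl_injective (fun b => by simp) hc₀ n
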